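/- Let f : ℝ → ℝ be smooth and let F : ℝ → ℝ be a smooth function with F'(s) = f(s) for all s. Then for EVERY smooth function u : ℝ × ℝ → ℝ (not necessarily a solution), the pointwise identity D_t( ½ u² u_x² − F(u) ) + D_x( −½ u⁴ u_{xx}² − u³ u_x² u_{xx} − ½ u² u_x⁴ − u² u_t u_x − f(u) u² u_{xx} − f(u) u u_x² − ½ f(u)² ) = ( u_t + u² u_{xxx} + 4 u u_x u_{xx} + u_x³ + f'(u) u_x ) · ( −u² u_{xx} − u u_x² − f(u) ) holds. In particular, on any solution of the generalized quasilinear KdV equation, the energy density T₃ = ½ u² u_x² − F(u) and flux X₃ satisfy the conservation law D_t T₃ + D_x X₃ = 0. -/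

import Mathlib

/-- Partial derivative with respect to the first (time) variable. -/
noncomputable def pdt (u : ℝ × ℝ → ℝ) (p : ℝ × ℝ) : ℝ :=
  deriv (fun s => u (s, p.2)) p.1

/-- Partial derivative with respect to the second (space) variable. -/
noncomputable def pdx (u : ℝ × ℝ → ℝ) (p : ℝ × ℝ) : ℝ :=
  deriv (fun s => u (p.1, s)) p.2

/-- Left-hand side of the generalized quasilinear KdV equation
`u_t + u² u_{xxx} + 4 u u_x u_{xx} + u_x³ + f'(u) u_x`. -/
noncomputable def kdvLHS (f : ℝ → ℝ) (u : ℝ × ℝ → ℝ) (p : ℝ × ℝ) : ℝ :=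
  pdt u p + (u p) ^ 2 * pdx (pdx (pdx u)) p + 4 * u p * pdx u p * pdx (pdx u) p
    + (pdx u p) ^ 3 + deriv f (u p) * pdx u p

/-- Energy density `T₃ = ½ u² u_x² − F(u)` where `F' = f`. -/
noncomputable def T3 (F : ℝ → ℝ) (u : ℝ × ℝ → ℝ) (p : ℝ × ℝ) : ℝ :=
  (1 / 2) * (u p) ^ 2 * (pdx u p) ^ 2 - F (u p)

/-- Energy flux `X₃`. -/
noncomputable def X3 (f : ℝ → ℝ) (u : ℝ × ℝ → ℝ) (p : ℝ × ℝ) : ℝ :=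
  -(1 / 2) * (u p) ^ 4 * (pdx (pdx u) p) ^ 2
    - (u p) ^ 3 * (pdx u p) ^ 2 * pdx (pdx u) p
    - (1 / 2) * (u p) ^ 2 * (pdx u p) ^ 4
    - (u p) ^ 2 * pdt u p * pdx u p
    - f (u p) * (u p) ^ 2 * pdx (pdx u) p
    - f (u p) * u p * (pdx u p) ^ 2
    - (1 / 2) * (f (u p)) ^ 2

lemma pdt_eq_fderiv (u : ℝ × ℝ → ℝ) (hu : Differentiable ℝ u) (p : ℝ × ℝ) :
    pdt u p = fderiv ℝ u p (1, 0) := by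
  have h1 : HasDerivAt (fun s : ℝ => (s, p.2)) ((1:ℝ), (0:ℝ)) p.1 :=
    HasDerivAt.prodMk (hasDerivAt_id p.1) (hasDerivAt_const p.1 p.2)
  have h2 := (hu (p.1, p.2)).hasFDerivAt.comp_hasDerivAt p.1 h1
  simp only [Prod.mk.eta, Function.comp_def] at h2
  unfold pdt
  exact h2.deriv

lemma pdx_eq_fderiv (u : ℝ × ℝ → ℝ) (hu : Differentiable ℝ u) (p : ℝ × ℝ) :
    pdx u p = fderiv ℝ u p (0, 1) := by
  have h1 : HasDerivAt (fun s : ℝ => (p.1, s)) ((0:ℝ), (1:ℝ)) p.2 :=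
    HasDerivAt.prodMk (hasDerivAt_const p.2 p.1) (hasDerivAt_id p.2)
  have h2 := (hu (p.1, p.2)).hasFDerivAt.comp_hasDerivAt p.2 h1
  simp only [Prod.mk.eta, Function.comp_def] at h2
  unfold pdx
  exact h2.deriv

lemma contDiff_pdt (u : ℝ × ℝ → ℝ) (hu : ContDiff ℝ (⊤ : ℕ∞) u) : ContDiff ℝ (⊤ : ℕ∞) (pdt u) := by
  have : pdt u = fun p => fderiv ℝ u p (1, 0) :=
    funext fun p => pdt_eq_fderiv u (hu.differentiable (by simp)) p
  rw [this]
  exact (hu.fderiv_right (by simp)).clm_apply contDiff_const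

lemma contDiff_pdx (u : ℝ × ℝ → ℝ) (hu : ContDiff ℝ (⊤ : ℕ∞) u) : ContDiff ℝ (⊤ : ℕ∞) (pdx u) := by
  have : pdx u = fun p => fderiv ℝ u p (0, 1) :=
    funext fun p => pdx_eq_fderiv u (hu.differentiable (by simp)) p
  rw [this]
  exact (hu.fderiv_right (by simp)).clm_apply contDiff_const

lemma pdt_pdx_comm (u : ℝ × ℝ → ℝ) (hu : ContDiff ℝ (⊤ : ℕ∞) u) (p : ℝ × ℝ) :
    pdt (pdx u) p = pdx (pdt u) p := by
  have hd : Differentiable ℝ u := hu.differentiable (by simp)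
  have hfd : Differentiable ℝ (fderiv ℝ u) :=
    (hu.fderiv_right (m := (⊤ : ℕ∞)) (by simp)).differentiable (by simp)
  have hsymm := second_derivative_symmetric (f := u) (f' := fderiv ℝ u)
      (fun y => (hd y).hasFDerivAt) (hfd p).hasFDerivAt
      ((1:ℝ), (0:ℝ)) ((0:ℝ), (1:ℝ))
  have hc1 : HasFDerivAt (fun q => fderiv ℝ u q ((0:ℝ), (1:ℝ)))
      ((ContinuousLinearMap.apply ℝ ℝ ((0:ℝ), (1:ℝ))).comp (fderiv ℝ (fderiv ℝ u) p)) p :=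
    ((ContinuousLinearMap.apply ℝ ℝ ((0:ℝ),(1:ℝ))).hasFDerivAt).comp p (hfd p).hasFDerivAt
  have hc2 : HasFDerivAt (fun q => fderiv ℝ u q ((1:ℝ), (0:ℝ)))
      ((ContinuousLinearMap.apply ℝ ℝ ((1:ℝ), (0:ℝ))).comp (fderiv ℝ (fderiv ℝ u) p)) p :=
    ((ContinuousLinearMap.apply ℝ ℝ ((1:ℝ),(0:ℝ))).hasFDerivAt).comp p (hfd p).hasFDerivAt
  have e1 : pdx u = fun q => fderiv ℝ u q ((0:ℝ), (1:ℝ)) :=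
    funext fun q => pdx_eq_fderiv u hd q
  have e2 : pdt u = fun q => fderiv ℝ u q ((1:ℝ), (0:ℝ)) :=
    funext fun q => pdt_eq_fderiv u hd q
  calc pdt (pdx u) p = fderiv ℝ (pdx u) p (1, 0) :=
        pdt_eq_fderiv _ ((contDiff_pdx u hu).differentiable (by simp)) p
    _ = fderiv ℝ (fderiv ℝ u) p (1, 0) (0, 1) := by rw [e1, hc1.fderiv]; rfl
    _ = fderiv ℝ (fderiv ℝ u) p (0, 1) (1, 0) := hsymm
    _ = fderiv ℝ (pdt u) p (0, 1) := by rw [e2, hc2.fderiv]; rfl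
    _ = pdx (pdt u) p :=
        (pdx_eq_fderiv _ ((contDiff_pdt u hu).differentiable (by simp)) p).symm

lemma hasDerivAt_pdt (u : ℝ × ℝ → ℝ) (hu : ContDiff ℝ (⊤ : ℕ∞) u) (t x : ℝ) :
    HasDerivAt (fun s => u (s, x)) (pdt u (t, x)) t := by
  have h : Differentiable ℝ (fun s : ℝ => u (s, x)) :=
    (hu.differentiable (by simp)).comp (differentiable_id.prodMk (differentiable_const x))
  exact (h t).hasDerivAt

lemma hasDerivAt_pdx (u : ℝ × ℝ → ℝ) (hu : ContDiff ℝ (⊤ : ℕ∞) u) (t x : ℝ) :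
    HasDerivAt (fun s => u (t, s)) (pdx u (t, x)) x := by
  have h : Differentiable ℝ (fun s : ℝ => u (t, s)) :=
    (hu.differentiable (by simp)).comp ((differentiable_const t).prodMk differentiable_id)
  exact (h x).hasDerivAt

/-- The multiplier identity `D_t T₃ + D_x X₃ = (kdv LHS) · (−u² u_{xx} − u u_x² − f(u))`
holds for every smooth function `u`; in particular, on solutions the conservation law
`D_t T₃ + D_x X₃ = 0` holds. -/
theorem energy_conservation_law (f F : ℝ → ℝ) (hf : ContDiff ℝ (⊤ : ℕ∞) f)
    (hF : ContDiff ℝ (⊤ : ℕ∞) F) (hF' : ∀ s : ℝ, deriv F s = f s)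
    (u : ℝ × ℝ → ℝ) (hu : ContDiff ℝ (⊤ : ℕ∞) u) :
    (∀ p : ℝ × ℝ, pdt (T3 F u) p + pdx (X3 f u) p
      = kdvLHS f u p * (-(u p) ^ 2 * pdx (pdx u) p - u p * (pdx u p) ^ 2 - f (u p))) ∧
      ((∀ p : ℝ × ℝ, kdvLHS f u p = 0) →
        ∀ p : ℝ × ℝ, pdt (T3 F u) p + pdx (X3 f u) p = 0) := by
  have hux := contDiff_pdx u hu
  have huxx := contDiff_pdx _ hux
  have hut := contDiff_pdt u hu
  have main : ∀ p : ℝ × ℝ, pdt (T3 F u) p + pdx (X3 f u) p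
      = kdvLHS f u p * (-(u p) ^ 2 * pdx (pdx u) p - u p * (pdx u p) ^ 2 - f (u p)) := by
    rintro ⟨t, x⟩
    have hU : HasDerivAt (fun s => u (s, x)) (pdt u (t, x)) t := hasDerivAt_pdt u hu t x
    have hUx : HasDerivAt (fun s => pdx u (s, x)) (pdt (pdx u) (t, x)) t :=
      hasDerivAt_pdt _ hux t x
    have hFA : HasDerivAt F (f (u (t, x))) (u (t, x)) := by
      have h := ((hF.differentiable (by simp)) (u (t, x))).hasDerivAt
      rwa [hF'] at h
    have h1 : HasDerivAt (fun s => T3 F u (s, x))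
        (u (t, x) * pdt u (t, x) * (pdx u (t, x)) ^ 2
          + (u (t, x)) ^ 2 * pdx u (t, x) * pdt (pdx u) (t, x)
          - f (u (t, x)) * pdt u (t, x)) t := by
      have h := (((hU.pow 2).const_mul ((1:ℝ)/2)).mul (hUx.pow 2)).sub (hFA.comp t hU)
      simp only [T3]
      convert h using 1
      · rfl
      · rfl
      · rfl
      simp only [Pi.pow_apply, Pi.mul_apply]
      ring
    have hu0 : HasDerivAt (fun s => u (t, s)) (pdx u (t, x)) x := hasDerivAt_pdx u hu t x
    have hu1 : HasDerivAt (fun s => pdx u (t, s)) (pdx (pdx u) (t, x)) x :=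
      hasDerivAt_pdx _ hux t x
    have hu2 : HasDerivAt (fun s => pdx (pdx u) (t, s)) (pdx (pdx (pdx u)) (t, x)) x :=
      hasDerivAt_pdx _ huxx t x
    have hut0 : HasDerivAt (fun s => pdt u (t, s)) (pdx (pdt u) (t, x)) x :=
      hasDerivAt_pdx _ hut t x
    have hfA : HasDerivAt f (deriv f (u (t, x))) (u (t, x)) :=
      ((hf.differentiable (by simp)) (u (t, x))).hasDerivAt
    have hfu : HasDerivAt (fun s => f (u (t, s))) (deriv f (u (t, x)) * pdx u (t, x)) x :=
      hfA.comp x hu0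
    have h2 : HasDerivAt (fun s => X3 f u (t, s))
        (-(2 * (u (t,x))^3 * pdx u (t,x) * (pdx (pdx u) (t,x))^2)
          - (u (t,x))^4 * pdx (pdx u) (t,x) * pdx (pdx (pdx u)) (t,x)
          - (3 * (u (t,x))^2 * (pdx u (t,x))^3 * pdx (pdx u) (t,x)
            + 2 * (u (t,x))^3 * pdx u (t,x) * (pdx (pdx u) (t,x))^2
            + (u (t,x))^3 * (pdx u (t,x))^2 * pdx (pdx (pdx u)) (t,x))
          - (u (t,x) * (pdx u (t,x))^5 + 2 * (u (t,x))^2 * (pdx u (t,x))^3 * pdx (pdx u) (t,x))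
          - (2 * u (t,x) * pdt u (t,x) * (pdx u (t,x))^2
            + (u (t,x))^2 * pdx (pdt u) (t,x) * pdx u (t,x)
            + (u (t,x))^2 * pdt u (t,x) * pdx (pdx u) (t,x))
          - (deriv f (u (t,x)) * pdx u (t,x) * (u (t,x))^2 * pdx (pdx u) (t,x)
            + 2 * f (u (t,x)) * u (t,x) * pdx u (t,x) * pdx (pdx u) (t,x)
            + f (u (t,x)) * (u (t,x))^2 * pdx (pdx (pdx u)) (t,x))
          - (deriv f (u (t,x)) * pdx u (t,x) * u (t,x) * (pdx u (t,x))^2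
            + f (u (t,x)) * (pdx u (t,x))^3
            + 2 * f (u (t,x)) * u (t,x) * pdx u (t,x) * pdx (pdx u) (t,x))
          - f (u (t,x)) * deriv f (u (t,x)) * pdx u (t,x)) x := by
      have h := ((((((((hu0.pow 4).const_mul (-(1/2:ℝ))).mul (hu2.pow 2)).sub
        (((hu0.pow 3).mul (hu1.pow 2)).mul hu2)).sub
        (((hu0.pow 2).const_mul ((1:ℝ)/2)).mul (hu1.pow 4))).sub
        (((hu0.pow 2).mul hut0).mul hu1)).sub
        ((hfu.mul (hu0.pow 2)).mul hu2)).sub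
        ((hfu.mul hu0).mul (hu1.pow 2))).sub
        ((hfu.pow 2).const_mul ((1:ℝ)/2))
      simp only [X3]
      convert h using 1
      · rfl
      · rfl
      · rfl
      simp only [Pi.pow_apply, Pi.mul_apply]
      push_cast
      ring
    have e1 := h1.deriv
    have e2 := h2.deriv
    have g1 : pdt (T3 F u) (t, x) = _ := e1
    have g2 : pdx (X3 f u) (t, x) = _ := e2
    rw [g1, g2, ← pdt_pdx_comm u hu (t, x)]
    simp only [kdvLHS]
    ring
  exact ⟨main, fun hs p => by rw [main p, hs p, zero_mul]⟩
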